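/- For every 3CNF system (A, a) over n ≥ 1 variables, v(P_mult(A, a)) = v(P_lex(A, a)). -/

import Mathlib

noncomputable section

/-- The tuple type `(z, f, s, t, u)` of five vectors in `ℝ^m`. -/
abbrev Tup (m : ℕ) : Type :=
  (Fin m → ℝ) × (Fin m → ℝ) × (Fin m → ℝ) × (Fin m → ℝ) × (Fin m → ℝ)

def Tz {m : ℕ} (p : Tup m) : Fin m → ℝ := p.1
def Tf {m : ℕ} (p : Tup m) : Fin m → ℝ := p.2.1
def Ts {m : ℕ} (p : Tup m) : Fin m → ℝ := p.2.2.1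
def Tt {m : ℕ} (p : Tup m) : Fin m → ℝ := p.2.2.2.1
def Tu {m : ℕ} (p : Tup m) : Fin m → ℝ := p.2.2.2.2

/-- The feasible set `Flex(m, θ)`. -/
def Flex (m : ℕ) (θ : ℝ) : Set (Tup m) :=
  { p | (∀ i : Fin m, i.val = m - 1 → Tu p i = θ) ∧
        (∀ i : Fin m,
          (3 / 2) * Tu p i - 1 / 2 ≤ Ts p i ∧
          (3 / 2) * Tu p i - 1 ≤ Tt p i ∧
          Tz p i = 2 * (Ts p i - Tt p i) ∧
          -(Tf p i) ≤ Tz p i - 1 / 2 ∧ Tz p i - 1 / 2 ≤ Tf p i ∧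
          0 ≤ Tz p i ∧ Tz p i ≤ 1 ∧ 0 ≤ Tf p i ∧ Tf p i ≤ 1 ∧
          0 ≤ Ts p i ∧ Ts p i ≤ 1 ∧ 0 ≤ Tt p i ∧ Tt p i ≤ 1 ∧
          0 ≤ Tu p i ∧ Tu p i ≤ 1) ∧
        (∀ i : Fin m, 1 ≤ i.val →
          Tu p ⟨i.val - 1, Nat.lt_of_le_of_lt (Nat.sub_le _ _) i.isLt⟩ =
            3 * Tu p i - 2 * Tz p i) }

/-- The set of minimizers of `g` over `S`. -/
def argminOn {α : Type} (g : α → ℝ) (S : Set α) : Set α :=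
  {x ∈ S | ∀ y ∈ S, g x ≤ g y}

/-- The lexicographic optimal set `Slex(m, θ)`: first minimize `s_m + t_m`, then
`s_{m-1} + t_{m-1}`, …, then `s_1 + t_1`, and finally `∑ f_i` over `Flex(m, θ)`. -/
def Slex (m : ℕ) (θ : ℝ) : Set (Tup m) :=
  argminOn (fun p => ∑ i : Fin m, Tf p i)
    ((List.finRange m).reverse.foldl
      (fun S i => argminOn (fun p => Ts p i + Tt p i) S) (Flex m θ))
/-- `(A, a)` is a 3CNF system. -/
def Is3CNF {n p : ℕ} (A : Matrix (Fin p) (Fin n) ℤ) (a : Fin p → ℤ) : Prop :=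
  ∃ P N : Matrix (Fin p) (Fin n) ℤ,
    (∀ j i, 0 ≤ P j i) ∧ (∀ j i, 0 ≤ N j i) ∧ A = P - N ∧
    (∀ j, a j = ∑ i, N j i) ∧ (∀ j, (∑ i, (P j i + N j i)) = 3)

/-- `(A, a)` has a satisfying assignment. -/
def SatAssign {n p : ℕ} (A : Matrix (Fin p) (Fin n) ℤ) (a : Fin p → ℤ) : Prop :=
  ∃ μ : Fin n → ℤ, (∀ i, μ i = 0 ∨ μ i = 1) ∧ ∀ j, 1 - a j ≤ ∑ i, A j i * μ i
/-- The system `B z ≥ b` associated with a 3CNF system `(A, a)`, for `z ∈ ℝ^{n+1}`. -/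
def BzGe {n p : ℕ} (A : Matrix (Fin p) (Fin n) ℤ) (a : Fin p → ℤ) (z : Fin (n + 1) → ℝ) :
    Prop :=
  (∀ j, 3 / 2 - z (Fin.last n) / 2 - (a j : ℝ) ≤ ∑ i : Fin n, (A j i : ℝ) * z i.castSucc) ∧
  (∀ i : Fin n, 1 / 2 - z (Fin.last n) / 2 ≤ z i.castSucc ∧
    z i.castSucc ≤ 1 / 2 + z (Fin.last n) / 2)

/-- The upper-level objective `2 Σ_{i=1}^n (z_{n+1} − 2 f_i) − (2/n) Σ_{i=1}^n f_i`. -/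
def mObj (n : ℕ) (z f : Fin (n + 1) → ℝ) : ℝ :=
  2 * ∑ i : Fin n, (z (Fin.last n) - 2 * f i.castSucc) -
    (2 / (n : ℝ)) * ∑ i : Fin n, f i.castSucc

/-- The feasible set of the bilevel program `P_mult(A, a)`, consisting of pairs `(z, f)`. -/
def FMult {n p : ℕ} (A : Matrix (Fin p) (Fin n) ℤ) (a : Fin p → ℤ) :
    Set ((Fin (n + 1) → ℝ) × (Fin (n + 1) → ℝ)) :=
  {q | BzGe A a q.1 ∧ (∀ i, 0 ≤ q.1 i ∧ q.1 i ≤ 1) ∧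
       q.2 ∈ argminOn (fun f' => ∑ i, f' i)
         {f' : Fin (n + 1) → ℝ |
           ∀ i, (-(f' i) ≤ q.1 i - 1 / 2 ∧ q.1 i - 1 / 2 ≤ f' i) ∧ 0 ≤ f' i ∧ f' i ≤ 1}}

/-- The feasible set of `P_lex(A, a)`, consisting of tuples `(θ, (z, f, s, t, u))`. -/
def FLexProb {n p : ℕ} (A : Matrix (Fin p) (Fin n) ℤ) (a : Fin p → ℤ) :
    Set (ℝ × Tup (n + 1)) :=
  {q | q.1 ∈ Set.Icc (0 : ℝ) 1 ∧ BzGe A a (Tz q.2) ∧ q.2 ∈ Slex (n + 1) q.1}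

namespace Stmt9Aux

lemma foldl_subset {m : ℕ} (L : List (Fin m)) (S : Set (Tup m)) :
    L.foldl (fun S i => argminOn (fun p => Ts p i + Tt p i) S) S ⊆ S := by
  induction L generalizing S with
  | nil => simp
  | cons i L ih =>
      intro x hx
      exact (ih _ hx).1

/-- replace the `f`-component by `|z - 1/2|`. -/
def frep {m : ℕ} (p : Tup m) : Tup m :=
  (Tz p, fun i => |Tz p i - 1/2|, Ts p, Tt p, Tu p)

@[simp] lemma frep_z {m} (p : Tup m) : Tz (frep p) = Tz p := rfl
@[simp] lemma frep_f {m} (p : Tup m) : Tf (frep p) = fun i => |Tz p i - 1/2| := rfl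
@[simp] lemma frep_s {m} (p : Tup m) : Ts (frep p) = Ts p := rfl
@[simp] lemma frep_t {m} (p : Tup m) : Tt (frep p) = Tt p := rfl
@[simp] lemma frep_u {m} (p : Tup m) : Tu (frep p) = Tu p := rfl

lemma frep_mem_Flex {m : ℕ} {θ : ℝ} {p : Tup m} (hp : p ∈ Flex m θ) : frep p ∈ Flex m θ := by
  obtain ⟨h1, h2, h3⟩ := hp
  refine ⟨by simpa using h1, ?_, by simpa using h3⟩
  intro i
  obtain ⟨a1, a2, a3, a4, a5, a6, a7, a8, a9, a10, a11, a12, a13, a14, a15⟩ := h2 i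
  simp only [frep_z, frep_f, frep_s, frep_t, frep_u]
  refine ⟨a1, a2, a3, neg_abs_le _, le_abs_self _, a6, a7, abs_nonneg _, ?_, a10, a11, a12, a13, a14, a15⟩
  rw [abs_le]; constructor <;> linarith

lemma frep_mem_foldl {m : ℕ} (L : List (Fin m)) (S : Set (Tup m))
    (hS : ∀ q ∈ S, frep q ∈ S) {p : Tup m}
    (hp : p ∈ L.foldl (fun S i => argminOn (fun p => Ts p i + Tt p i) S) S) :
    frep p ∈ L.foldl (fun S i => argminOn (fun p => Ts p i + Tt p i) S) S := by
  induction L generalizing S with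
  | nil => exact hS p hp
  | cons i L ih =>
      refine ih _ ?_ hp
      rintro q ⟨hq1, hq2⟩
      exact ⟨hS q hq1, fun y hy => by simpa using hq2 y hy⟩

lemma eq_of_sum_le {m : ℕ} (g h : Fin m → ℝ) (hle : ∀ i, g i ≤ h i)
    (hs : ∑ i, h i ≤ ∑ i, g i) : ∀ i, h i = g i := by
  have h0 : ∑ i : Fin m, (h i - g i) = 0 := by
    rw [Finset.sum_sub_distrib]
    have := Finset.sum_le_sum (s := Finset.univ) (fun i _ => hle i)
    linarith
  intro i
  have := (Finset.sum_eq_zero_iff_of_nonneg (fun i _ => by linarith [hle i])).mp h0 i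
    (Finset.mem_univ i)
  linarith

lemma Tf_eq_abs_of_mem_Slex {m : ℕ} {θ : ℝ} {q : Tup m} (hq : q ∈ Slex m θ) :
    ∀ i, Tf q i = |Tz q i - 1/2| := by
  obtain ⟨hq0, hmin⟩ := hq
  have hqF : q ∈ Flex m θ := foldl_subset _ _ hq0
  have hrep := frep_mem_foldl _ _ (fun r hr => frep_mem_Flex hr) hq0
  have hsum : ∑ i, Tf q i ≤ ∑ i, |Tz q i - 1/2| := by simpa using hmin (frep q) hrep
  have hge : ∀ i, |Tz q i - 1/2| ≤ Tf q i := by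
    intro i
    obtain ⟨a1, a2, a3, a4, a5, _⟩ := hqF.2.1 i
    rw [abs_le]; exact ⟨by linarith, a5⟩
  exact eq_of_sum_le _ _ hge hsum

end Stmt9Aux

namespace Stmt9Aux

lemma mem_Slex_of_tight {m : ℕ} {θ : ℝ} {P : Tup m}
    (hF : P ∈ Flex m θ)
    (hs : ∀ i, Ts P i = max 0 ((3 * Tu P i - 1) / 2))
    (ht : ∀ i, Tt P i = max 0 ((3 * Tu P i - 2) / 2))
    (hf : ∀ i, Tf P i = |Tz P i - 1/2|) :
    P ∈ Slex m θ := by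
  set Sj : ℕ → Set (Tup m) := fun j =>
    (((List.finRange m).drop j).reverse).foldl
      (fun S i => argminOn (fun p => Ts p i + Tt p i) S) (Flex m θ) with hSjdef
  have hSjFlex : ∀ j, Sj j ⊆ Flex m θ := fun j => foldl_subset _ _
  have hbound : ∀ q ∈ Flex m θ, ∀ i : Fin m,
      max 0 ((3 * Tu q i - 1) / 2) ≤ Ts q i ∧ max 0 ((3 * Tu q i - 2) / 2) ≤ Tt q i := by
    intro q hq i
    obtain ⟨a1, a2, a3, a4, a5, a6, a7, a8, a9, a10, a11, a12, a13, a14, a15⟩ := hq.2.1 i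
    exact ⟨max_le a10 (by linarith), max_le a12 (by linarith)⟩
  have key : ∀ k, k ≤ m → (P ∈ Sj (m - k) ∧ ∀ q ∈ Sj (m - k), ∀ i : Fin m, m - k ≤ i.val →
      Tu q i = Tu P i ∧ Tz q i = Tz P i) := by
    intro k
    induction k with
    | zero =>
        intro _
        constructor
        · have : (List.finRange m).drop (m - 0) = [] := by
            apply List.drop_eq_nil_of_le
            simp
          rw [hSjdef]; simp only [this, List.reverse_nil, List.foldl_nil]
          exact hF
        · intro q hq i hi
          exact absurd i.isLt (by omega)
    | succ k ih =>
        intro hk1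
        obtain ⟨ihP, ihU⟩ := ih (by omega)
        set j := m - (k + 1) with hj
        have hjm : j < m := by omega
        have hjk : m - k = j + 1 := by omega
        rw [hjk] at ihP ihU
        have hdrop : (List.finRange m).drop j = ⟨j, hjm⟩ :: (List.finRange m).drop (j + 1) := by
          rw [List.drop_eq_getElem_cons (by simpa using hjm)]
          congr 1
          simp
        have hSj : Sj j = argminOn (fun p => Ts p ⟨j, hjm⟩ + Tt p ⟨j, hjm⟩) (Sj (j + 1)) := by
          rw [hSjdef]
          simp only [hdrop, List.reverse_cons, List.foldl_append, List.foldl_cons, List.foldl_nil]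
        -- the value of u at index j is the same for all points of Sj (j+1)
        have hu : ∀ q ∈ Sj (j + 1), Tu q ⟨j, hjm⟩ = Tu P ⟨j, hjm⟩ := by
          intro q hq
          have hqF : q ∈ Flex m θ := hSjFlex _ hq
          by_cases hlast : j = m - 1
          · rw [hqF.1 ⟨j, hjm⟩ hlast, hF.1 ⟨j, hjm⟩ hlast]
          · have hj1 : j + 1 < m := by omega
            have hrecq := hqF.2.2 ⟨j + 1, hj1⟩ (by simp)
            have hrecP := hF.2.2 ⟨j + 1, hj1⟩ (by simp)
            obtain ⟨hU, hZ⟩ := ihU q hq ⟨j + 1, hj1⟩ (by simp)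
            have e : (⟨(⟨j + 1, hj1⟩ : Fin m).val - 1,
                Nat.lt_of_le_of_lt (Nat.sub_le _ _) (⟨j + 1, hj1⟩ : Fin m).isLt⟩ : Fin m)
                = ⟨j, hjm⟩ := by
              apply Fin.ext; simp
            rw [e] at hrecq hrecP
            rw [hrecq, hrecP, hU, hZ]
        have hPmin : ∀ q ∈ Sj (j + 1),
            Ts P ⟨j, hjm⟩ + Tt P ⟨j, hjm⟩ ≤ Ts q ⟨j, hjm⟩ + Tt q ⟨j, hjm⟩ := by
          intro q hq
          obtain ⟨b1, b2⟩ := hbound q (hSjFlex _ hq) ⟨j, hjm⟩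
          rw [hs, ht, ← hu q hq]
          linarith
        have hPj : P ∈ Sj j := by
          rw [hSj]
          exact ⟨ihP, fun y hy => hPmin y hy⟩
        refine ⟨hPj, ?_⟩
        intro q hq i hi
        rw [hSj] at hq
        obtain ⟨hq1, hqmin⟩ := hq
        rcases Nat.lt_or_ge i.val (j + 1) with hlt | hge
        · have hij : i = ⟨j, hjm⟩ := Fin.ext (by simp only [Fin.val_mk]; omega)
          subst hij
          refine ⟨hu q hq1, ?_⟩
          obtain ⟨b1, b2⟩ := hbound q (hSjFlex _ hq1) ⟨j, hjm⟩
          have hle : Ts q ⟨j, hjm⟩ + Tt q ⟨j, hjm⟩ ≤ Ts P ⟨j, hjm⟩ + Tt P ⟨j, hjm⟩ :=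
            hqmin P ihP
          have hsum := hPmin q hq1
          have hPs := hs ⟨j, hjm⟩
          have hPt := ht ⟨j, hjm⟩
          have huq := hu q hq1
          have hsq : Ts q ⟨j, hjm⟩ = Ts P ⟨j, hjm⟩ := by
            rw [hPs, ← huq]; rw [hPs, ht, ← huq] at hle; linarith
          have htq : Tt q ⟨j, hjm⟩ = Tt P ⟨j, hjm⟩ := by
            rw [hPt, ← huq]; rw [hs, hPt, ← huq] at hle; linarith
          have hzq := ((hSjFlex _ hq1).2.1 ⟨j, hjm⟩).2.2.1
          have hzP := (hF.2.1 ⟨j, hjm⟩).2.2.1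
          rw [hzq, hzP, hsq, htq]
        · exact ihU q hq1 i hge
  obtain ⟨hP0, hU0⟩ := key m le_rfl
  simp only [Nat.sub_self] at hP0 hU0
  have h00 : Sj 0 = (List.finRange m).reverse.foldl
      (fun S i => argminOn (fun p => Ts p i + Tt p i) S) (Flex m θ) := by
    rw [hSjdef]; simp
  rw [h00] at hP0 hU0
  refine ⟨hP0, ?_⟩
  intro q hq
  have hqF : q ∈ Flex m θ := foldl_subset _ _ hq
  have h1 : ∑ i, Tf P i = ∑ i, |Tz q i - 1/2| := by
    apply Finset.sum_congr rfl
    intro i _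
    rw [hf i, (hU0 q hq i (by omega)).2]
  calc (fun p => ∑ i, Tf p i) P = ∑ i, |Tz q i - 1/2| := h1
    _ ≤ ∑ i, Tf q i := by
        apply Finset.sum_le_sum
        intro i _
        obtain ⟨a1, a2, a3, a4, a5, _⟩ := hqF.2.1 i
        rw [abs_le]; exact ⟨by linarith, a5⟩

end Stmt9Aux

namespace Stmt9Aux

/-! ### The UNSAT witness point, θ = 1/6 -/

def ptU (n : ℕ) : Tup (n + 1) :=
  (fun i => if i.val = n then 0 else 1/2,
   fun i => if i.val = n then 1/2 else 0,
   fun i => if i.val = n then 0 else 1/4,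
   fun _ => 0,
   fun i => if i.val = n then 1/6 else 1/2)

lemma ptU_mem_Flex (n : ℕ) (hn : 1 ≤ n) : ptU n ∈ Flex (n + 1) (1/6) := by
  refine ⟨?_, ?_, ?_⟩
  · intro i hi
    have : i.val = n := by omega
    simp only [ptU, Tu, this, if_pos]
  · intro i
    by_cases h : i.val = n <;>
      simp only [ptU, Tz, Tf, Ts, Tt, Tu, h, if_pos, if_true, if_neg, if_false] <;>
      norm_num [abs_of_nonneg]
  · intro i hi
    have h1 : ¬(i.val - 1 = n) := by omega
    simp only [ptU, Tu, Tz, Fin.val_mk, h1, if_neg, if_false]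
    by_cases h : i.val = n <;> simp only [h, if_pos, if_true, if_neg, if_false] <;> norm_num

lemma ptU_mem_Slex (n : ℕ) (hn : 1 ≤ n) : ptU n ∈ Slex (n + 1) (1/6) := by
  apply mem_Slex_of_tight (ptU_mem_Flex n hn)
  · intro i
    by_cases h : i.val = n <;> simp only [ptU, Ts, Tu, h, if_pos, if_true, if_neg, if_false]
    · rw [max_eq_left (by norm_num)]
    · rw [max_eq_right (by norm_num)]; norm_num
  · intro i
    by_cases h : i.val = n <;> simp only [ptU, Tt, Tu, h, if_pos, if_true, if_neg, if_false] <;>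
      rw [max_eq_left (by norm_num)]
  · intro i
    by_cases h : i.val = n <;> simp only [ptU, Tf, Tz, h, if_pos, if_true, if_neg, if_false]
    · rw [show (0:ℝ) - 1/2 = -(1/2) by norm_num, abs_neg,
        abs_of_nonneg (by norm_num : (0:ℝ) ≤ 1/2)]
    · norm_num

/-! ### The SAT witness point -/

def Uu (ν : ℕ → ℝ) : ℕ → ℝ
  | 0 => 2 * ν 0 / 3
  | (j + 1) => (Uu ν j + 2 * ν (j + 1)) / 3

section Uu
variable {ν : ℕ → ℝ} (hν : ∀ j, ν j = 0 ∨ ν j = 1)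
include hν

lemma Uu_mem : ∀ j, 0 ≤ Uu ν j ∧ Uu ν j ≤ 1 := by
  intro j
  induction j with
  | zero => rcases hν 0 with h | h <;> simp only [Uu, h] <;> norm_num
  | succ j ih =>
      obtain ⟨ih1, ih2⟩ := ih
      rcases hν (j + 1) with h | h <;> simp only [Uu, h] <;> constructor <;> linarith

lemma Uu_ge (j : ℕ) (h : ν j = 1) : 2/3 ≤ Uu ν j := by
  cases j with
  | zero => simp only [Uu, h]; norm_num
  | succ j => have := (Uu_mem hν j).1; simp only [Uu, h]; linarith

lemma Uu_le (j : ℕ) (h : ν j = 0) : Uu ν j ≤ 1/3 := by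
  cases j with
  | zero => simp only [Uu, h]; norm_num
  | succ j => have := (Uu_mem hν j).2; simp only [Uu, h]; linarith

end Uu

def ptS (ν : ℕ → ℝ) (n : ℕ) : Tup (n + 1) :=
  (fun i => ν i.val, fun _ => 1/2,
   fun i => max 0 ((3 * Uu ν i.val - 1) / 2),
   fun i => max 0 ((3 * Uu ν i.val - 2) / 2),
   fun i => Uu ν i.val)

lemma ptS_mem_Flex {ν : ℕ → ℝ} (hν : ∀ j, ν j = 0 ∨ ν j = 1) (n : ℕ) :
    ptS ν n ∈ Flex (n + 1) (Uu ν n) := by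
  refine ⟨?_, ?_, ?_⟩
  · intro i hi
    have : i.val = n := by omega
    simp only [ptS, Tu, this]
  · intro i
    obtain ⟨hu0, hu1⟩ := Uu_mem hν i.val
    simp only [ptS, Tz, Tf, Ts, Tt, Tu]
    have e1 : (3:ℝ)/2 * Uu ν i.val - 1/2 = (3 * Uu ν i.val - 1) / 2 := by ring
    have e2 : (3:ℝ)/2 * Uu ν i.val - 1 = (3 * Uu ν i.val - 2) / 2 := by ring
    refine ⟨by rw [e1]; exact le_max_right _ _, by rw [e2]; exact le_max_right _ _, ?_, ?_, ?_,
      ?_, ?_, by norm_num, by norm_num, le_max_left _ _, max_le (by norm_num) (by linarith),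
      le_max_left _ _, max_le (by norm_num) (by linarith), hu0, hu1⟩
    · rcases hν i.val with h | h
      · have hle := Uu_le hν i.val h
        rw [h, max_eq_left (by linarith), max_eq_left (by linarith)]
        norm_num
      · have hge := Uu_ge hν i.val h
        rw [h, max_eq_right (by linarith), max_eq_right (by linarith)]
        ring
    · rcases hν i.val with h | h <;> rw [h] <;> norm_num
    · rcases hν i.val with h | h <;> rw [h] <;> norm_num
    · rcases hν i.val with h | h <;> rw [h] <;> norm_num
    · rcases hν i.val with h | h <;> rw [h] <;> norm_num
  · intro i hi
    simp only [ptS, Tu, Tz, Fin.val_mk]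
    obtain ⟨k, hk⟩ := Nat.exists_eq_succ_of_ne_zero (n := i.val) (by omega)
    rw [hk]
    simp only [Nat.succ_sub_one, Nat.add_sub_cancel]
    show Uu ν k = 3 * ((Uu ν k + 2 * ν (k + 1)) / 3) - 2 * ν (k + 1)
    ring

lemma ptS_mem_Slex {ν : ℕ → ℝ} (hν : ∀ j, ν j = 0 ∨ ν j = 1) (n : ℕ) :
    ptS ν n ∈ Slex (n + 1) (Uu ν n) := by
  apply mem_Slex_of_tight (ptS_mem_Flex hν n)
  · intro i; rfl
  · intro i; rfl
  · intro i
    show (1/2 : ℝ) = |ν i.val - 1/2|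
    rcases hν i.val with h | h <;> rw [h] <;> norm_num [abs_of_nonneg]

end Stmt9Aux

namespace Stmt9Aux

variable {n p : ℕ} {A : Matrix (Fin p) (Fin n) ℤ} {a : Fin p → ℤ}

lemma threeCNF_facts (h3 : Is3CNF A a) :
    (∀ j, ∑ i, A j i = 3 - 2 * a j) ∧ (∀ j i, |(A j i : ℝ)| ≤ 3) := by
  obtain ⟨P, N, hP, hN, hA, ha, hPN⟩ := h3
  have hsub : ∀ j i, A j i = P j i - N j i := by
    intro j i; rw [hA]; simp [Matrix.sub_apply]
  have hPle : ∀ j i, P j i + N j i ≤ 3 := by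
    intro j i
    have h1 : P j i + N j i ≤ ∑ i', (P j i' + N j i') :=
      Finset.single_le_sum (f := fun i' => P j i' + N j i')
        (fun i' _ => add_nonneg (hP j i') (hN j i')) (Finset.mem_univ i)
    rw [hPN j] at h1; exact h1
  constructor
  · intro j
    have h1 : ∑ i, A j i = ∑ i, (P j i - N j i) := Finset.sum_congr rfl fun i _ => hsub j i
    rw [h1, Finset.sum_sub_distrib]
    have h2 : ∑ i, P j i + ∑ i, N j i = 3 := by rw [← Finset.sum_add_distrib]; exact hPN j
    have h3 := ha j
    linarith
  · intro j i
    have h1 : |A j i| ≤ 3 := by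
      rw [hsub j i, abs_le]
      constructor
      · have := hP j i; have := hN j i; have := hPle j i; omega
      · have := hP j i; have := hN j i; have := hPle j i; omega
    calc |(A j i : ℝ)| = ((|A j i| : ℤ) : ℝ) := by push_cast; ring
      _ ≤ ((3 : ℤ) : ℝ) := by exact_mod_cast h1
      _ = 3 := by norm_num

lemma FMult_f_eq {q : (Fin (n + 1) → ℝ) × (Fin (n + 1) → ℝ)} (hq : q ∈ FMult A a) :
    ∀ i, q.2 i = |q.1 i - 1/2| := by
  obtain ⟨hB, hbox, hfeas, hmin⟩ := hq
  have hg : (fun i => |q.1 i - 1/2|) ∈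
      {f' : Fin (n + 1) → ℝ |
        ∀ i, (-(f' i) ≤ q.1 i - 1 / 2 ∧ q.1 i - 1 / 2 ≤ f' i) ∧ 0 ≤ f' i ∧ f' i ≤ 1} := by
    intro i
    refine ⟨⟨neg_abs_le _, le_abs_self _⟩, abs_nonneg _, ?_⟩
    obtain ⟨h0, h1⟩ := hbox i
    rw [abs_le]; constructor <;> linarith
  have hsum : ∑ i, q.2 i ≤ ∑ i, |q.1 i - 1/2| := hmin _ hg
  have hge : ∀ i, |q.1 i - 1/2| ≤ q.2 i := by
    intro i
    obtain ⟨⟨h1, h2⟩, _⟩ := hfeas i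
    rw [abs_le]; exact ⟨by linarith, h2⟩
  exact eq_of_sum_le _ _ hge hsum

lemma mObj_ge_neg_one (hn : 1 ≤ n) {q : (Fin (n + 1) → ℝ) × (Fin (n + 1) → ℝ)}
    (hq : q ∈ FMult A a) : -1 ≤ mObj n q.1 q.2 := by
  obtain ⟨hB, hbox, hfeas, hmin⟩ := hq
  have hfa := FMult_f_eq ⟨hB, hbox, hfeas, hmin⟩
  set lam := q.1 (Fin.last n) with hlam
  obtain ⟨hlam0, hlam1⟩ := hbox (Fin.last n)
  have hfl : ∀ i : Fin n, q.2 i.castSucc ≤ lam / 2 := by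
    intro i
    obtain ⟨hb1, hb2⟩ := hB.2 i
    rw [hfa, abs_le]; constructor <;> linarith
  set F := ∑ i : Fin n, q.2 i.castSucc with hF
  have hF0 : 0 ≤ F := Finset.sum_nonneg fun i _ => by rw [hfa]; exact abs_nonneg _
  have hFle : F ≤ (n : ℝ) * lam / 2 := by
    calc F ≤ ∑ _i : Fin n, lam / 2 := Finset.sum_le_sum fun i _ => hfl i
      _ = (n : ℝ) * lam / 2 := by
          rw [Finset.sum_const, Finset.card_univ, Fintype.card_fin, nsmul_eq_mul]; ring
  have hn1 : (1 : ℝ) ≤ (n : ℝ) := by exact_mod_cast hn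
  have hnpos : (0 : ℝ) < (n : ℝ) := by linarith
  have hobj : mObj n q.1 q.2 = 2 * ((n : ℝ) * lam - 2 * F) - 2 / (n : ℝ) * F := by
    rw [mObj, Finset.sum_sub_distrib, Finset.sum_const, Finset.card_univ, Fintype.card_fin,
      nsmul_eq_mul, ← Finset.mul_sum, ← hF, ← hlam]
  have h1 : 2 / (n : ℝ) * F ≤ lam := by
    rw [div_mul_eq_mul_div, div_le_iff₀ hnpos]
    nlinarith [hFle]
  rw [hobj]
  linarith

lemma mObj_ge_zero (hn : 1 ≤ n) (h3 : Is3CNF A a) (hunsat : ¬ SatAssign A a)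
    {q : (Fin (n + 1) → ℝ) × (Fin (n + 1) → ℝ)}
    (hq : q ∈ FMult A a) : 0 ≤ mObj n q.1 q.2 := by
  classical
  obtain ⟨hB, hbox, hfeas, hmin⟩ := hq
  have hfa := FMult_f_eq ⟨hB, hbox, hfeas, hmin⟩
  set lam := q.1 (Fin.last n) with hlam
  obtain ⟨hlam0, hlam1⟩ := hbox (Fin.last n)
  have hfl : ∀ i : Fin n, q.2 i.castSucc ≤ lam / 2 := by
    intro i
    obtain ⟨hb1, hb2⟩ := hB.2 i
    rw [hfa, abs_le]; constructor <;> linarith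
  set F := ∑ i : Fin n, q.2 i.castSucc with hF
  have hF0 : 0 ≤ F := Finset.sum_nonneg fun i _ => by rw [hfa]; exact abs_nonneg _
  have hn1 : (1 : ℝ) ≤ (n : ℝ) := by exact_mod_cast hn
  have hnpos : (0 : ℝ) < (n : ℝ) := by linarith
  have hobj : mObj n q.1 q.2 = 2 * ((n : ℝ) * lam - 2 * F) - 2 / (n : ℝ) * F := by
    rw [mObj, Finset.sum_sub_distrib, Finset.sum_const, Finset.card_univ, Fintype.card_fin,
      nsmul_eq_mul, ← Finset.mul_sum, ← hF, ← hlam]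
  -- round to a 0/1 assignment; some clause is violated
  set μ : Fin n → ℤ := fun i => if (1 : ℝ)/2 ≤ q.1 i.castSucc then 1 else 0 with hμ
  have hμ1 : ∀ i, (1 : ℝ)/2 ≤ q.1 i.castSucc → μ i = 1 := by
    intro i h; simp only [hμ]; rw [if_pos h]
  have hμ0 : ∀ i, ¬((1 : ℝ)/2 ≤ q.1 i.castSucc) → μ i = 0 := by
    intro i h; simp only [hμ]; rw [if_neg h]
  have hμ01 : ∀ i, μ i = 0 ∨ μ i = 1 := by
    intro i
    by_cases h : (1 : ℝ)/2 ≤ q.1 i.castSucc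
    · exact Or.inr (hμ1 i h)
    · exact Or.inl (hμ0 i h)
  have hviol : ∃ j, ∑ i, A j i * μ i ≤ -a j := by
    by_contra hcon
    push_neg at hcon
    exact hunsat ⟨μ, hμ01, fun j => by have := hcon j; linarith⟩
  obtain ⟨j, hj⟩ := hviol
  have hclause := hB.1 j
  have hdelta : ∀ i : Fin n, q.1 i.castSucc - 1/2 = (2 * (μ i : ℝ) - 1) * q.2 i.castSucc := by
    intro i
    by_cases h : (1 : ℝ)/2 ≤ q.1 i.castSucc
    · have hμi : μ i = 1 := hμ1 i h
      rw [hfa, hμi]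
      rw [abs_of_nonneg (by linarith)]
      push_cast; ring
    · have hμi : μ i = 0 := hμ0 i h
      rw [hfa, hμi]
      rw [abs_of_neg (by linarith)]
      push_cast; ring
  have habs : ∀ i : Fin n, |(A j i : ℝ)| ≤ 3 := fun i => (threeCNF_facts h3).2 j i
  have hterm : ∀ i : Fin n, (A j i : ℝ) * q.1 i.castSucc ≤
      (A j i : ℝ) * (1/2) + (A j i : ℝ) * (2 * (μ i : ℝ) - 1) * (lam/2) +
        3 * (lam/2 - q.2 i.castSucc) := by
    intro i
    have hσ : |2 * (μ i : ℝ) - 1| = 1 := by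
      rcases hμ01 i with h | h <;> rw [h] <;> norm_num
    have hz : q.1 i.castSucc = 1/2 + (2 * (μ i : ℝ) - 1) * q.2 i.castSucc := by
      have := hdelta i; linarith
    have hfl2 := hfl i
    have e1 : (A j i : ℝ) * ((2 * (μ i : ℝ) - 1) * (q.2 i.castSucc - lam/2)) ≤
        |(A j i : ℝ)| * (lam/2 - q.2 i.castSucc) := by
      calc (A j i : ℝ) * ((2 * (μ i : ℝ) - 1) * (q.2 i.castSucc - lam/2))
          ≤ |(A j i : ℝ) * ((2 * (μ i : ℝ) - 1) * (q.2 i.castSucc - lam/2))| := le_abs_self _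
        _ = |(A j i : ℝ)| * (|2 * (μ i : ℝ) - 1| * |q.2 i.castSucc - lam/2|) := by
            rw [abs_mul, abs_mul]
        _ = |(A j i : ℝ)| * (lam/2 - q.2 i.castSucc) := by
            rw [hσ, abs_of_nonpos (show q.2 i.castSucc - lam/2 ≤ 0 by linarith)]; ring
    have e2 : |(A j i : ℝ)| * (lam/2 - q.2 i.castSucc) ≤ 3 * (lam/2 - q.2 i.castSucc) :=
      mul_le_mul_of_nonneg_right (habs i) (by linarith)
    rw [hz]
    nlinarith [e1, e2]
  have hsumineq : ∑ i : Fin n, (A j i : ℝ) * q.1 i.castSucc ≤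
      (∑ i : Fin n, (A j i : ℝ)) * (1/2) +
        (∑ i : Fin n, (A j i : ℝ) * (2 * (μ i : ℝ) - 1)) * (lam/2) +
        3 * ((n : ℝ) * lam / 2 - F) := by
    calc ∑ i : Fin n, (A j i : ℝ) * q.1 i.castSucc
        ≤ ∑ i : Fin n, ((A j i : ℝ) * (1/2) + (A j i : ℝ) * (2 * (μ i : ℝ) - 1) * (lam/2) +
            3 * (lam/2 - q.2 i.castSucc)) := Finset.sum_le_sum fun i _ => hterm i
      _ = (∑ i : Fin n, (A j i : ℝ)) * (1/2) +
            (∑ i : Fin n, (A j i : ℝ) * (2 * (μ i : ℝ) - 1)) * (lam/2) +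
            3 * ((n : ℝ) * lam / 2 - F) := by
          rw [Finset.sum_add_distrib, Finset.sum_add_distrib, ← Finset.sum_mul, ← Finset.sum_mul,
            ← Finset.mul_sum, Finset.sum_sub_distrib, Finset.sum_const, Finset.card_univ,
            Fintype.card_fin, nsmul_eq_mul, ← hF]
          ring
  have hAsum : (∑ i : Fin n, (A j i : ℝ)) = 3 - 2 * (a j : ℝ) := by
    exact_mod_cast (threeCNF_facts h3).1 j
  have hAσ : (∑ i : Fin n, (A j i : ℝ) * (2 * (μ i : ℝ) - 1)) ≤ -3 := by
    have h1 : (∑ i : Fin n, (A j i : ℝ) * (2 * (μ i : ℝ) - 1)) =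
        2 * (∑ i : Fin n, (A j i : ℝ) * (μ i : ℝ)) - ∑ i : Fin n, (A j i : ℝ) := by
      rw [show (∑ i : Fin n, (A j i : ℝ) * (2 * (μ i : ℝ) - 1)) =
          ∑ i : Fin n, (2 * ((A j i : ℝ) * (μ i : ℝ)) - (A j i : ℝ)) from
        Finset.sum_congr rfl (fun i _ => by ring), Finset.sum_sub_distrib, ← Finset.mul_sum]
    have h2 : (∑ i : Fin n, (A j i : ℝ) * (μ i : ℝ)) ≤ -(a j : ℝ) := by exact_mod_cast hj
    rw [h1, hAsum]
    linarith
  have hAσlam : (∑ i : Fin n, (A j i : ℝ) * (2 * (μ i : ℝ) - 1)) * (lam/2) ≤ -3 * (lam/2) :=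
    mul_le_mul_of_nonneg_right hAσ (by linarith)
  rw [hAsum] at hsumineq
  have hFle2 : F ≤ (n : ℝ) * lam / 2 - lam / 3 := by linarith
  have h1 : 2 / (n : ℝ) * F ≤ lam := by
    rw [div_mul_eq_mul_div, div_le_iff₀ hnpos]
    nlinarith [hFle2, hlam0]
  rw [hobj]
  linarith

end Stmt9Aux

namespace Stmt9Aux

variable {n p : ℕ} {A : Matrix (Fin p) (Fin n) ℤ} {a : Fin p → ℤ}

lemma ptU_z_last (n : ℕ) : Tz (ptU n) (Fin.last n) = 0 := by
  simp [ptU, Tz]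

lemma ptU_z_castSucc (n : ℕ) (i : Fin n) : Tz (ptU n) i.castSucc = 1/2 := by
  simp only [ptU, Tz, Fin.coe_castSucc]
  rw [if_neg (Nat.ne_of_lt i.isLt)]

lemma ptU_f_castSucc (n : ℕ) (i : Fin n) : Tf (ptU n) i.castSucc = 0 := by
  simp only [ptU, Tf, Fin.coe_castSucc]
  rw [if_neg (Nat.ne_of_lt i.isLt)]

lemma ptU_val (n : ℕ) : mObj n (Tz (ptU n)) (Tf (ptU n)) = 0 := by
  rw [mObj]
  rw [Finset.sum_congr rfl (fun (i : Fin n) _ => by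
    rw [ptU_z_last, ptU_f_castSucc] : ∀ i ∈ Finset.univ,
      Tz (ptU n) (Fin.last n) - 2 * Tf (ptU n) i.castSucc = 0 - 2 * 0)]
  rw [Finset.sum_congr rfl (fun (i : Fin n) _ => ptU_f_castSucc n i)]
  simp

lemma ptU_BzGe (h3 : Is3CNF A a) : BzGe A a (Tz (ptU n)) := by
  constructor
  · intro j
    have hsum : ∑ i : Fin n, (A j i : ℝ) * Tz (ptU n) i.castSucc =
        (∑ i : Fin n, (A j i : ℝ)) * (1/2) := by
      rw [Finset.sum_mul]
      exact Finset.sum_congr rfl fun i _ => by rw [ptU_z_castSucc]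
    have hAsum : (∑ i : Fin n, (A j i : ℝ)) = 3 - 2 * (a j : ℝ) := by
      exact_mod_cast (threeCNF_facts h3).1 j
    rw [hsum, ptU_z_last, hAsum]
    linarith
  · intro i
    rw [ptU_z_last, ptU_z_castSucc]
    norm_num

lemma ptU_mem_FLexProb (hn : 1 ≤ n) (h3 : Is3CNF A a) :
    ((1/6 : ℝ), ptU n) ∈ FLexProb A a :=
  ⟨⟨by norm_num, by norm_num⟩, ptU_BzGe h3, ptU_mem_Slex n hn⟩

/-! SAT point packaging -/

def nuOf (n : ℕ) (μ : Fin n → ℤ) : ℕ → ℝ := fun j => if h : j < n then (μ ⟨j, h⟩ : ℝ) else 1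

lemma nuOf_01 {μ : Fin n → ℤ} (hμ : ∀ i, μ i = 0 ∨ μ i = 1) :
    ∀ j, nuOf n μ j = 0 ∨ nuOf n μ j = 1 := by
  intro j
  by_cases h : j < n
  · rcases hμ ⟨j, h⟩ with h1 | h1
    · left; simp [nuOf, h, h1]
    · right; simp [nuOf, h, h1]
  · right; simp [nuOf, h]

lemma ptS_z_last (μ : Fin n → ℤ) : Tz (ptS (nuOf n μ) n) (Fin.last n) = 1 := by
  simp only [ptS, Tz, Fin.val_last, nuOf]
  rw [dif_neg (lt_irrefl n)]

lemma ptS_z_castSucc (μ : Fin n → ℤ) (i : Fin n) :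
    Tz (ptS (nuOf n μ) n) i.castSucc = (μ i : ℝ) := by
  simp only [ptS, Tz, Fin.coe_castSucc, nuOf]
  rw [dif_pos i.isLt]

lemma ptS_f (μ : Fin n → ℤ) (i : Fin (n + 1)) : Tf (ptS (nuOf n μ) n) i = 1/2 := rfl

lemma ptS_val (hn : 1 ≤ n) (μ : Fin n → ℤ) :
    mObj n (Tz (ptS (nuOf n μ) n)) (Tf (ptS (nuOf n μ) n)) = -1 := by
  have hnpos : (0 : ℝ) < (n : ℝ) := by
    have : (1 : ℝ) ≤ (n : ℝ) := by exact_mod_cast hn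
    linarith
  rw [mObj]
  rw [Finset.sum_congr rfl (fun (i : Fin n) _ => by
    rw [ptS_z_last, ptS_f] : ∀ i ∈ Finset.univ,
      Tz (ptS (nuOf n μ) n) (Fin.last n) - 2 * Tf (ptS (nuOf n μ) n) i.castSucc
        = 1 - 2 * (1/2 : ℝ))]
  rw [Finset.sum_congr rfl (fun (i : Fin n) _ => ptS_f μ i.castSucc)]
  rw [Finset.sum_const, Finset.sum_const, Finset.card_univ, Fintype.card_fin, nsmul_eq_mul,
    nsmul_eq_mul]
  field_simp
  ring

lemma ptS_BzGe (h3 : Is3CNF A a) {μ : Fin n → ℤ} (hμ01 : ∀ i, μ i = 0 ∨ μ i = 1)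
    (hμsat : ∀ j, 1 - a j ≤ ∑ i, A j i * μ i) : BzGe A a (Tz (ptS (nuOf n μ) n)) := by
  constructor
  · intro j
    have hsum : ∑ i : Fin n, (A j i : ℝ) * Tz (ptS (nuOf n μ) n) i.castSucc =
        ∑ i : Fin n, (A j i : ℝ) * (μ i : ℝ) :=
      Finset.sum_congr rfl fun i _ => by rw [ptS_z_castSucc]
    have hsat : (1 : ℝ) - (a j : ℝ) ≤ ∑ i : Fin n, (A j i : ℝ) * (μ i : ℝ) := by
      exact_mod_cast hμsat j
    rw [hsum, ptS_z_last]
    linarith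
  · intro i
    rw [ptS_z_last, ptS_z_castSucc]
    rcases hμ01 i with h | h <;> rw [h] <;> norm_num

lemma ptS_mem_FLexProb (hn : 1 ≤ n) (h3 : Is3CNF A a) {μ : Fin n → ℤ}
    (hμ01 : ∀ i, μ i = 0 ∨ μ i = 1) (hμsat : ∀ j, 1 - a j ≤ ∑ i, A j i * μ i) :
    ((Uu (nuOf n μ) n : ℝ), ptS (nuOf n μ) n) ∈ FLexProb A a :=
  ⟨⟨(Uu_mem (nuOf_01 hμ01) n).1, (Uu_mem (nuOf_01 hμ01) n).2⟩,
    ptS_BzGe h3 hμ01 hμsat, ptS_mem_Slex (nuOf_01 hμ01) n⟩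

end Stmt9Aux

open Stmt9Aux

/-- for every 3CNF system `(A, a)` over `n ≥ 1` variables,
`v(P_mult(A, a)) = v(P_lex(A, a))` (optimal values as infima in the extended reals). -/
theorem stmt9 (n p : ℕ) (hn : 1 ≤ n)
    (A : Matrix (Fin p) (Fin n) ℤ) (a : Fin p → ℤ) (h3 : Is3CNF A a) :
    sInf ((fun q => ((mObj n q.1 q.2 : ℝ) : EReal)) '' FMult A a) =
    sInf ((fun q => ((mObj n (Tz q.2) (Tf q.2) : ℝ) : EReal)) '' FLexProb A a) := by
  classical
  apply le_antisymm
  · apply sInf_le_sInf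
    rintro x ⟨q, hq, rfl⟩
    obtain ⟨hθ, hB, hSlex⟩ := hq
    have hfa := Tf_eq_abs_of_mem_Slex hSlex
    have hFlex : q.2 ∈ Flex (n + 1) q.1 := foldl_subset _ _ hSlex.1
    refine ⟨(Tz q.2, Tf q.2), ⟨hB, ?_, ?_, ?_⟩, rfl⟩
    · intro i
      obtain ⟨_, _, _, _, _, h6, h7, _⟩ := hFlex.2.1 i
      exact ⟨h6, h7⟩
    · intro i
      obtain ⟨_, _, _, h4, h5, _, _, h8, h9, _⟩ := hFlex.2.1 i
      exact ⟨⟨h4, h5⟩, h8, h9⟩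
    · intro y hy
      have h1 : ∑ i, Tf q.2 i = ∑ i, |Tz q.2 i - 1/2| :=
        Finset.sum_congr rfl fun i _ => hfa i
      show ∑ i, Tf q.2 i ≤ ∑ i, y i
      rw [h1]
      exact Finset.sum_le_sum fun i _ =>
        abs_le.mpr ⟨by linarith [(hy i).1.1], (hy i).1.2⟩
  · apply le_sInf
    rintro x ⟨q, hq, rfl⟩
    by_cases hsat : SatAssign A a
    · obtain ⟨μ, hμ01, hμsat⟩ := hsat
      calc sInf ((fun q => ((mObj n (Tz q.2) (Tf q.2) : ℝ) : EReal)) '' FLexProb A a)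
          ≤ (((-1 : ℝ)) : EReal) := by
            apply sInf_le
            exact ⟨((Uu (nuOf n μ) n : ℝ), ptS (nuOf n μ) n),
              ptS_mem_FLexProb hn h3 hμ01 hμsat, by
                show ((mObj n (Tz (ptS (nuOf n μ) n)) (Tf (ptS (nuOf n μ) n)) : ℝ) : EReal)
                  = ((-1 : ℝ) : EReal)
                rw [ptS_val hn μ]⟩
        _ ≤ ((mObj n q.1 q.2 : ℝ) : EReal) :=
            EReal.coe_le_coe_iff.mpr (mObj_ge_neg_one hn hq)
    · calc sInf ((fun q => ((mObj n (Tz q.2) (Tf q.2) : ℝ) : EReal)) '' FLexProb A a)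
          ≤ (((0 : ℝ)) : EReal) := by
            apply sInf_le
            exact ⟨((1/6 : ℝ), ptU n), ptU_mem_FLexProb hn h3, by
              show ((mObj n (Tz (ptU n)) (Tf (ptU n)) : ℝ) : EReal) = ((0 : ℝ) : EReal)
              rw [ptU_val n]⟩
        _ ≤ ((mObj n q.1 q.2 : ℝ) : EReal) :=
            EReal.coe_le_coe_iff.mpr (mObj_ge_zero hn h3 hsat hq)
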